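/- For the sequence λ_0 = 0, λ_{n+1} = (1/2)(λ_n + sqrt(λ_n^2 + 4)), the ratio λ_{n+1}/λ_n (for n ≥ 1) is decreasing in n and converges to 1. -/

import Mathlib

/-! Each step satisfies `λₙ₊₁² = λₙ λₙ₊₁ + 1`, so `λₙ₊₁ / λₙ = 1 + 1 / (λₙ λₙ₊₁)`. The sequence
is increasing, so the ratio decreases; and `λₙ² ≥ n`, so `λₙ λₙ₊₁ → ∞` and the ratio tends to `1`. -/

noncomputable def lam : ℕ → ℝ
  | 0 => 0
  | n + 1 => (lam n + Real.sqrt (lam n ^ 2 + 4)) / 2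

open Filter Topology

lemma lam_succ_pos (n : ℕ) : 0 < lam (n + 1) := by
  have h : |lam n| < Real.sqrt (lam n ^ 2 + 4) := by
    rw [← Real.sqrt_sq_eq_abs]
    exact Real.sqrt_lt_sqrt (sq_nonneg _) (by linarith)
  rw [lam]
  linarith [neg_abs_le (lam n)]

lemma lam_pos {n : ℕ} (hn : n ≠ 0) : 0 < lam n := by
  obtain ⟨k, rfl⟩ := Nat.exists_eq_succ_of_ne_zero hn
  exact lam_succ_pos k

lemma lam_succ_sq (n : ℕ) : lam (n + 1) ^ 2 = lam n * lam (n + 1) + 1 := by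
  have hs : Real.sqrt (lam n ^ 2 + 4) ^ 2 = lam n ^ 2 + 4 := Real.sq_sqrt (by positivity)
  rw [lam]
  linear_combination hs / 4

-- `λₙ₊₁ (λₙ₊₁ - λₙ) = 1` with `λₙ₊₁ > 0`.
lemma lam_lt_succ (n : ℕ) : lam n < lam (n + 1) := by
  nlinarith [lam_succ_sq n, lam_succ_pos n]

lemma lam_strictMono : StrictMono lam := strictMono_nat_of_lt_succ lam_lt_succ

lemma lam_nonneg (n : ℕ) : 0 ≤ lam n := by
  simpa [lam] using lam_strictMono.monotone (Nat.zero_le n)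

lemma lam_succ_div_lam {n : ℕ} (hn : n ≠ 0) :
    lam (n + 1) / lam n = 1 + (lam n * lam (n + 1))⁻¹ := by
  have := lam_pos hn
  have := lam_succ_pos n
  field_simp
  linear_combination lam_succ_sq n

lemma natCast_le_lam_sq (n : ℕ) : (n : ℝ) ≤ lam n ^ 2 := by
  induction n with
  | zero => simp [lam]
  | succ n ih =>
    push_cast
    nlinarith [lam_succ_sq n, lam_lt_succ n, lam_nonneg n]

lemma lam_mul_lam_succ_monotone : Monotone fun n => lam n * lam (n + 1) := fun m n hmn =>
  mul_le_mul (lam_strictMono.monotone hmn) (lam_strictMono.monotone (by omega))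
    (lam_nonneg _) (lam_nonneg _)

lemma tendsto_lam_mul_lam_succ_atTop : Tendsto (fun n => lam n * lam (n + 1)) atTop atTop := by
  refine tendsto_atTop_mono (fun n => ?_) tendsto_natCast_atTop_atTop
  calc (n : ℝ) ≤ lam n ^ 2 := natCast_le_lam_sq n
    _ = lam n * lam n := sq _
    _ ≤ lam n * lam (n + 1) := mul_le_mul_of_nonneg_left (lam_lt_succ n).le (lam_nonneg n)

theorem stmt_5 :
    (∀ m n : ℕ, 1 ≤ m → m ≤ n → lam (n + 1) / lam n ≤ lam (m + 1) / lam m) ∧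
    Filter.Tendsto (fun n => lam (n + 1) / lam n) Filter.atTop (nhds 1) := by
  constructor
  · intro m n hm hmn
    rw [lam_succ_div_lam (by omega), lam_succ_div_lam (by omega)]
    have := mul_pos (lam_pos (by omega : m ≠ 0)) (lam_succ_pos m)
    gcongr 1 + ?_⁻¹
    exact lam_mul_lam_succ_monotone hmn
  · have hlim : Tendsto (fun n => 1 + (lam n * lam (n + 1))⁻¹) atTop (𝓝 1) := by
      simpa using tendsto_const_nhds.add tendsto_lam_mul_lam_succ_atTop.inv_tendsto_atTop
    refine hlim.congr' ?_
    filter_upwards [eventually_ne_atTop 0] with n hn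
    exact (lam_succ_div_lam hn).symm
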